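/- Let N ≥ 1, let x_j = cos(jπ/N) for j = 0, …, N be the Chebyshev–Gauss–Lobatto nodes, and let the weights be w_0 = w_N = π/(2N) and w_j = π/N for 1 ≤ j ≤ N−1. Then for every polynomial v of degree at most 2N − 1, the quadrature formula is exact: Σ_{j=0}^{N} v(x_j)·w_j = ∫_{−1}^{1} v(x)·(1 − x²)^{−1/2} dx. -/

import Mathlib

open Polynomial Real Finset intervalIntegral

/-!
Both sides are linear in `v`, and `T 0, …, T (2N - 1)` span the polynomials of degree
`< 2N`, so it suffices to treat `v = T k`. Under `x = cos θ` the weighted integral becomes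
`∫₀^π cos (kθ) dθ`, which is `π` for `k = 0` and `0` otherwise. The quadrature sum is the
trapezoidal rule for this integral with step `π/N`; multiplied by `sin (a/2)`, where
`a = kπ/N`, the trapezoidal sum of `cos (j a)` telescopes to `cos (a/2) sin (kπ) = 0`, and
`sin (a/2) ≠ 0` because `0 < a/2 < π` for `0 < k < 2N`.
-/

theorem Finset.sum_range_succ_mul_trapezoid_weight {N : ℕ} (hN : N ≠ 0) (f : ℕ → ℝ)
    (c : ℝ) :
    ∑ j ∈ range (N + 1), f j * (if j = 0 ∨ j = N then c / 2 else c)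
      = c / 2 * ∑ j ∈ range N, (f j + f (j + 1)) := by
  obtain ⟨M, rfl⟩ := Nat.exists_eq_succ_of_ne_zero hN
  have hinterior : ∀ j ∈ range M,
      f (j + 1) * (if j + 1 = 0 ∨ j + 1 = M + 1 then c / 2 else c) = c * f (j + 1) := by
    intro j hj
    rw [if_neg (by simp only [mem_range] at hj; omega), mul_comm]
  rw [sum_range_succ, sum_range_succ', sum_congr rfl hinterior, ← mul_sum, sum_add_distrib,
    sum_range_succ' f, sum_range_succ (fun j => f (j + 1))]
  simp only [true_or, or_true, if_true]
  ring

theorem Real.sin_half_mul_sum_cos_add_cos (a : ℝ) (n : ℕ) :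
    sin (a / 2) * ∑ j ∈ range n, (cos (j * a) + cos ((j + 1 : ℕ) * a))
      = cos (a / 2) * sin (n * a) := by
  induction n with
  | zero => simp
  | succ n ih =>
    have hsin : sin a = 2 * sin (a / 2) * cos (a / 2) := by
      rw [← sin_two_mul, mul_div_cancel₀ _ two_ne_zero]
    have hcos : cos a = 2 * cos (a / 2) ^ 2 - 1 := by
      rw [← cos_two_mul, mul_div_cancel₀ _ two_ne_zero]
    rw [sum_range_succ, mul_add, ih, Nat.cast_succ, add_one_mul, sin_add, cos_add, hsin, hcos]
    linear_combination (-2 * cos (a / 2) * sin (n * a)) * sin_sq_add_cos_sq (a / 2)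

namespace Polynomial.Chebyshev

open MeasureTheory

theorem eq_of_natDegree_le_of_eq_T {R M : Type*} [Field R] [NeZero (2 : R)] [AddCommGroup M]
    [Module R M] {f g : R[X] →ₗ[R] M} {m : ℕ} (h : ∀ k ≤ m, f (T R k) = g (T R k))
    {P : R[X]} (hP : P.natDegree ≤ m) : f P = g P := by
  have hspan : P ∈ Submodule.span R (chebyshevTsequence R '' Set.Iic m) := by
    rw [Sequence.span_degreeLE _ (by simp), mem_degreeLE]
    exact natDegree_le_iff_degree_le.mp hP
  refine LinearMap.eqOn_span' ?_ hspan
  rintro _ ⟨k, hk, rfl⟩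
  exact h k hk

noncomputable def integralMeasureT : ℝ[X] →ₗ[ℝ] ℝ where
  toFun P := ∫ x, P.eval x ∂measureT
  map_add' P Q := by
    simp only [eval_add]
    exact integral_add (integrable_measureT (by fun_prop)) (integrable_measureT (by fun_prop))
  map_smul' c P := by simpa using MeasureTheory.integral_const_mul c _

theorem integralMeasureT_apply (P : ℝ[X]) :
    integralMeasureT P = ∫ x, P.eval x ∂measureT :=
  rfl

noncomputable def lobattoWeight (N j : ℕ) : ℝ :=
  if j = 0 ∨ j = N then π / (2 * N) else π / N

noncomputable def sumLobatto (N : ℕ) : ℝ[X] →ₗ[ℝ] ℝ :=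
  ∑ j ∈ range (N + 1), lobattoWeight N j • leval (cos (j * π / N))

theorem sumLobatto_apply (N : ℕ) (P : ℝ[X]) :
    sumLobatto N P = ∑ j ∈ range (N + 1), P.eval (cos (j * π / N)) * lobattoWeight N j := by
  simp [sumLobatto, mul_comm]

theorem sumLobatto_eq_trapezoid {N : ℕ} (hN : N ≠ 0) (P : ℝ[X]) :
    sumLobatto N P
      = π / N / 2 *
        ∑ j ∈ range N, (P.eval (cos (j * π / N)) + P.eval (cos ((j + 1 : ℕ) * π / N))) := by
  have hweight : lobattoWeight N = fun j => if j = 0 ∨ j = N then π / N / 2 else π / N := by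
    ext j
    rw [lobattoWeight, div_div, mul_comm (N : ℝ)]
  rw [sumLobatto_apply, hweight, sum_range_succ_mul_trapezoid_weight hN]

theorem sumLobatto_T_zero {N : ℕ} (hN : N ≠ 0) : sumLobatto N (T ℝ 0) = π := by
  rw [sumLobatto_eq_trapezoid hN]
  simp only [T_zero, eval_one, sum_const, card_range, nsmul_eq_mul]
  field_simp
  ring

theorem sumLobatto_T_of_pos_of_lt {N k : ℕ} (hk₀ : 0 < k) (hk : k < 2 * N) :
    sumLobatto N (T ℝ k) = 0 := by
  have hN : (N : ℝ) ≠ 0 := by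
    rw [Nat.cast_ne_zero]
    omega
  set a : ℝ := k * π / N with ha
  have hnodes : ∀ j : ℕ, (T ℝ k).eval (cos (j * π / N)) = cos (j * a) := by
    intro j
    rw [T_real_cos]
    congr 1
    push_cast
    ring
  have hsin_half : sin (a / 2) ≠ 0 := by
    refine (sin_pos_of_pos_of_lt_pi (by positivity) ?_).ne'
    rw [div_div, div_lt_iff₀ (by positivity)]
    have : (k : ℝ) < 2 * N := by exact_mod_cast hk
    nlinarith [pi_pos]
  have hsin_N : sin (N * a) = 0 := by
    rw [show (N : ℝ) * a = k * π by rw [ha]; field_simp]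
    exact sin_nat_mul_pi k
  have htelescope := sin_half_mul_sum_cos_add_cos a N
  rw [hsin_N, mul_zero, mul_eq_zero, or_iff_right hsin_half] at htelescope
  rw [sumLobatto_eq_trapezoid (by omega)]
  simp only [hnodes, htelescope, mul_zero]

end Polynomial.Chebyshev

open Polynomial.Chebyshev

/-- Exactness of the Chebyshev–Gauss–Lobatto quadrature rule: with nodes
`x_j = cos(jπ/N)`, `j = 0, …, N`, and weights `w_0 = w_N = π/(2N)`,
`w_j = π/N` for `1 ≤ j ≤ N−1`, the rule integrates exactly every polynomial
of degree at most `2N − 1` against the Chebyshev weight `(1 − x²)^{−1/2}`. -/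
theorem chebyshev_gauss_lobatto_quadrature (N : ℕ) (hN : 1 ≤ N)
    (v : Polynomial ℝ) (hv : v.natDegree ≤ 2 * N - 1) :
    ∑ j ∈ Finset.range (N + 1),
        v.eval (Real.cos ((j : ℝ) * π / (N : ℝ)))
          * (if j = 0 ∨ j = N then π / (2 * (N : ℝ)) else π / (N : ℝ))
      = ∫ x in (-1 : ℝ)..1, v.eval x * (1 - x ^ 2) ^ (-(1 / 2 : ℝ)) := by
  have hT : ∀ k ≤ 2 * N - 1, sumLobatto N (T ℝ k) = integralMeasureT (T ℝ k) := by
    intro k hk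
    rcases Nat.eq_zero_or_pos k with rfl | hk₀
    · rw [Nat.cast_zero, sumLobatto_T_zero (by omega), integralMeasureT_apply,
        integral_eval_T_real_measureT_zero]
    · rw [sumLobatto_T_of_pos_of_lt hk₀ (by omega), integralMeasureT_apply,
        integral_eval_T_real_measureT_of_ne_zero (by omega)]
  have hv := eq_of_natDegree_le_of_eq_T hT hv
  rw [sumLobatto_apply, integralMeasureT_apply, integral_measureT] at hv
  refine hv.trans (integral_congr fun x hx => ?_)
  have hx : 0 ≤ 1 - x ^ 2 := by
    rw [Set.uIcc_of_le (by norm_num)] at hx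
    nlinarith [hx.1, hx.2]
  rw [sqrt_inv, sqrt_eq_rpow, rpow_neg hx]
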